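/- Let d ≥ 1, let a₁,…,a_d ∈ ℂ, and define f(z) = z + a₁/z + a₂/z² + ⋯ + a_d/z^d for z ∈ 𝔻* = {z ∈ ℂ : |z| > 1}. If f is injective on 𝔻*, then d·|a_d| ≤ 1. -/

import Mathlib

open Set Filter

noncomputable section

/-- The unit circle in `ℂ`. -/
def S1 : Set ℂ := {z : ℂ | ‖z‖ = 1}

/-- The parametrization `x ↦ e^{2πix}` of the unit circle. -/
noncomputable def expMap (x : ℝ) : ℂ := Complex.exp (2 * Real.pi * Complex.I * x)

/-- The closed positively oriented arc from `a` to `b` on the unit circle. -/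
def closedArc (a b : ℂ) : Set ℂ :=
  {z : ℂ | ∃ s t u : ℝ, a = expMap s ∧ z = expMap t ∧ b = expMap u ∧
    s ≤ t ∧ t ≤ u ∧ u < s + 1}

/-- The open positively oriented arc from `a` to `b` on the unit circle. -/
def openArc (a b : ℂ) : Set ℂ :=
  {z : ℂ | ∃ s t u : ℝ, a = expMap s ∧ z = expMap t ∧ b = expMap u ∧
    s < t ∧ t < u ∧ u < s + 1}

/-- `f` restricted to the unit circle is a covering of signed degree `d`:
it lifts under `x ↦ e^{2πix}` to a continuous map `F` with `F (x+1) = F x + d`.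
`d > 0` corresponds to an orientation-preserving covering of degree `d`, and
`d < 0` to an orientation-reversing covering of degree `|d|`. -/
def IsCircleCovering (f : ℂ → ℂ) (d : ℤ) : Prop :=
  ∃ F : ℝ → ℝ, Continuous F ∧ (∀ x : ℝ, f (expMap x) = expMap (F x)) ∧
    ∀ x : ℝ, F (x + 1) = F x + d

/-- The iterate `f^[m]` is an orientation-preserving circle covering. -/
def OrientPresIter (f : ℂ → ℂ) (m : ℕ) : Prop :=
  ∃ e : ℤ, 0 < e ∧ IsCircleCovering (f^[m]) e

/-- The iterate `f^[m]` is an orientation-reversing circle covering. -/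
def OrientRevIter (f : ℂ → ℂ) (m : ℕ) : Prop :=
  ∃ e : ℤ, e < 0 ∧ IsCircleCovering (f^[m]) e

/-- Expansivity of `f` on the unit circle. -/
def ExpansiveOn (f : ℂ → ℂ) : Prop :=
  ∃ δ : ℝ, 0 < δ ∧ ∀ a ∈ S1, ∀ b ∈ S1, a ≠ b →
    ∃ n : ℕ, δ < ‖f^[n] a - f^[n] b‖

/-- `h` is an orientation-preserving homeomorphism of the unit circle:
it lifts to a continuous strictly increasing map `H : ℝ → ℝ` commuting with `x ↦ x + 1`. -/
def OPCircleHomeo (h : ℂ → ℂ) : Prop :=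
  ∃ H : ℝ → ℝ, Continuous H ∧ StrictMono H ∧ (∀ x : ℝ, H (x + 1) = H x + 1) ∧
    ∀ x : ℝ, h (expMap x) = expMap (H x)

/-- A Markov partition `P(f; {a₀, …, a_r})` for a circle covering `f`. -/
structure MarkovPartition (f : ℂ → ℂ) (r : ℕ) (a : Fin (r + 1) → ℂ) : Prop where
  rpos : 1 ≤ r
  /-- The points `a₀, …, a_r` lie on the unit circle in positive cyclic order. -/
  cyclic : ∃ x : Fin (r + 1) → ℝ, StrictMono x ∧ (∀ k, a k = expMap (x k)) ∧
    x (Fin.last r) < x 0 + 1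
  /-- The closed arcs `A_k = [a_k, a_{k+1}]` cover the circle. -/
  cover : S1 ⊆ ⋃ k, closedArc (a k) (a (k + 1))
  /-- The arcs have pairwise disjoint interiors. -/
  disjInt : ∀ k j : Fin (r + 1), k ≠ j →
    openArc (a k) (a (k + 1)) ∩ openArc (a j) (a (j + 1)) = ∅
  /-- `f` is injective on each open arc. -/
  injOn : ∀ k, Set.InjOn f (openArc (a k) (a (k + 1)))
  /-- The Markov property. -/
  markov : ∀ k j : Fin (r + 1),
    (f '' openArc (a k) (a (k + 1)) ∩ openArc (a j) (a (j + 1))).Nonempty →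
    openArc (a j) (a (j + 1)) ⊆ f '' openArc (a k) (a (k + 1))
  /-- The set `{a₀, …, a_r}` is forward invariant. -/
  invariant : ∀ k, ∃ j, f (a k) = a j

/-- Condition (uv): piecewise conformal extensions on open sets `U_k`, `V_k` with
`⋃ {U_j : A_j ⊆ f(A_k)} ⊆ V_k`. -/
def CondUV (f : ℂ → ℂ) (r : ℕ) (a : Fin (r + 1) → ℂ) : Prop :=
  ∃ (U V : Fin (r + 1) → Set ℂ) (fk : Fin (r + 1) → ℂ → ℂ),
    (∀ k, IsOpen (U k)) ∧ (∀ k, IsOpen (V k)) ∧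
    (∀ k, openArc (a k) (a (k + 1)) ⊆ U k) ∧
    (∀ k, f '' openArc (a k) (a (k + 1)) ⊆ V k) ∧
    (∀ k, Set.InjOn (fk k) (U k)) ∧
    (∀ k, DifferentiableOn ℂ (fk k) (U k)) ∧
    (∀ k, fk k '' U k = V k) ∧
    (∀ k, Set.EqOn (fk k) f (openArc (a k) (a (k + 1)))) ∧
    (∀ k j, openArc (a j) (a (j + 1)) ⊆ f '' openArc (a k) (a (k + 1)) → U j ⊆ V k)

/-- Condition (hol): the restriction of `f` to each closed arc of the partition extends
holomorphically to a neighborhood of either endpoint. -/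
def CondHol (f : ℂ → ℂ) (r : ℕ) (a : Fin (r + 1) → ℂ) : Prop :=
  ∀ k : Fin (r + 1),
    (∃ W : Set ℂ, IsOpen W ∧ a k ∈ W ∧ ∃ g : ℂ → ℂ, DifferentiableOn ℂ g W ∧
      Set.EqOn g f (W ∩ closedArc (a k) (a (k + 1)))) ∧
    (∃ W : Set ℂ, IsOpen W ∧ a (k + 1) ∈ W ∧ ∃ g : ℂ → ℂ, DifferentiableOn ℂ g W ∧
      Set.EqOn g f (W ∩ closedArc (a k) (a (k + 1))))

/-- `q` is the orientation-preserving period of the periodic point `a`: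
the least `n ≥ 1` with `f^[n] a = a` and `f^[n]` orientation-preserving. -/
def OPPeriod (f : ℂ → ℂ) (a : ℂ) (q : ℕ) : Prop :=
  0 < q ∧ f^[q] a = a ∧ OrientPresIter f q ∧
    ∀ m : ℕ, 0 < m → m < q → ¬(f^[m] a = a ∧ OrientPresIter f m)

/-- The one-sided multiplier `λ(a⁺)` of the first return map `f^[q]` exists and equals `lam`. -/
def HasMultiplierPlus (f : ℂ → ℂ) (a : ℂ) (q : ℕ) (lam : ℝ) : Prop :=
  0 ≤ lam ∧ ∃ z₀ ∈ S1, z₀ ≠ a ∧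
    Filter.Tendsto (fun z : ℂ => (f^[q] z - a) / (z - a))
      (nhdsWithin a (openArc a z₀)) (nhds (lam : ℂ))

/-- The one-sided multiplier `λ(a⁻)` of the first return map `f^[q]` exists and equals `lam`. -/
def HasMultiplierMinus (f : ℂ → ℂ) (a : ℂ) (q : ℕ) (lam : ℝ) : Prop :=
  0 ≤ lam ∧ ∃ z₀ ∈ S1, z₀ ≠ a ∧
    Filter.Tendsto (fun z : ℂ => (f^[q] z - a) / (z - a))
      (nhdsWithin a (openArc z₀ a)) (nhds (lam : ℂ))

/-- `a` is an isolated fixed point (on the circle) of the return map `f^[q]`. -/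
def IsolatedFixedPt (f : ℂ → ℂ) (a : ℂ) (q : ℕ) : Prop :=
  ∃ ε : ℝ, 0 < ε ∧ ∀ z ∈ S1, z ≠ a → ‖z - a‖ < ε → f^[q] z ≠ z

/-- The return map `f^[q]` has, on the positive side of `a`, a holomorphic extension
with Taylor expansion `z + c (z - a)^(N+1) + O((z - a)^(N+2))`, `c ≠ 0`;
i.e. the parabolic point `a⁺` has `N(a⁺) = N`. -/
def TaylorPlus (f : ℂ → ℂ) (a : ℂ) (q : ℕ) (N : ℕ) : Prop :=
  0 < N ∧ ∃ z₁ ∈ S1, z₁ ≠ a ∧ ∃ W : Set ℂ, IsOpen W ∧ closedArc a z₁ ⊆ W ∧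
    ∃ g : ℂ → ℂ, DifferentiableOn ℂ g W ∧ Set.EqOn g (f^[q]) (closedArc a z₁) ∧
      ∃ c : ℂ, c ≠ 0 ∧
        Asymptotics.IsBigO (nhds a)
          (fun z : ℂ => g z - z - c * (z - a) ^ (N + 1))
          (fun z : ℂ => (z - a) ^ (N + 2))

/-- Negative-side version of `TaylorPlus`: the parabolic point `a⁻` has `N(a⁻) = N`. -/
def TaylorMinus (f : ℂ → ℂ) (a : ℂ) (q : ℕ) (N : ℕ) : Prop :=
  0 < N ∧ ∃ z₁ ∈ S1, z₁ ≠ a ∧ ∃ W : Set ℂ, IsOpen W ∧ closedArc z₁ a ⊆ W ∧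
    ∃ g : ℂ → ℂ, DifferentiableOn ℂ g W ∧ Set.EqOn g (f^[q]) (closedArc z₁ a) ∧
      ∃ c : ℂ, c ≠ 0 ∧
        Asymptotics.IsBigO (nhds a)
          (fun z : ℂ => g z - z - c * (z - a) ^ (N + 1))
          (fun z : ℂ => (z - a) ^ (N + 2))

/-- No iterate `f^[m'] a` with `m' < m` is a periodic point; used to express that
`m` is the minimal integer with `f^[m] a` periodic. -/
def MinPreperiod (f : ℂ → ℂ) (a : ℂ) (m : ℕ) : Prop :=
  ∀ m' : ℕ, m' < m → ¬ ∃ n : ℕ, 0 < n ∧ f^[n] (f^[m'] a) = f^[m'] a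

/-- `q` is the orientation-preserving period of the (pre)periodic point `a`. -/
def PrePeriodOf (f : ℂ → ℂ) (a : ℂ) (q : ℕ) : Prop :=
  ∃ m : ℕ, MinPreperiod f a m ∧ OPPeriod f (f^[m] a) q

/-- `a⁺` is hyperbolic with multiplier `lam > 1` (for preperiodic `a`, the multiplier is
taken at the periodic point on the orbit, with sides swapped if the connecting iterate
is orientation-reversing). -/
def SideHypPlus (f : ℂ → ℂ) (a : ℂ) (lam : ℝ) : Prop :=
  1 < lam ∧ ∃ m q : ℕ, MinPreperiod f a m ∧ OPPeriod f (f^[m] a) q ∧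
    ((OrientPresIter f m ∧ HasMultiplierPlus f (f^[m] a) q lam) ∨
     (OrientRevIter f m ∧ HasMultiplierMinus f (f^[m] a) q lam))

/-- `a⁻` is hyperbolic with multiplier `lam > 1`. -/
def SideHypMinus (f : ℂ → ℂ) (a : ℂ) (lam : ℝ) : Prop :=
  1 < lam ∧ ∃ m q : ℕ, MinPreperiod f a m ∧ OPPeriod f (f^[m] a) q ∧
    ((OrientPresIter f m ∧ HasMultiplierMinus f (f^[m] a) q lam) ∨
     (OrientRevIter f m ∧ HasMultiplierPlus f (f^[m] a) q lam))

/-- `a⁺` is parabolic: the one-sided multiplier equals `1` and the relevant periodic point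
is an isolated fixed point of its first return map. -/
def SideParPlus (f : ℂ → ℂ) (a : ℂ) : Prop :=
  ∃ m q : ℕ, MinPreperiod f a m ∧ OPPeriod f (f^[m] a) q ∧
    IsolatedFixedPt f (f^[m] a) q ∧
    ((OrientPresIter f m ∧ HasMultiplierPlus f (f^[m] a) q 1) ∨
     (OrientRevIter f m ∧ HasMultiplierMinus f (f^[m] a) q 1))

/-- `a⁻` is parabolic. -/
def SideParMinus (f : ℂ → ℂ) (a : ℂ) : Prop :=
  ∃ m q : ℕ, MinPreperiod f a m ∧ OPPeriod f (f^[m] a) q ∧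
    IsolatedFixedPt f (f^[m] a) q ∧
    ((OrientPresIter f m ∧ HasMultiplierMinus f (f^[m] a) q 1) ∨
     (OrientRevIter f m ∧ HasMultiplierPlus f (f^[m] a) q 1))

/-- `a⁺` is parabolic with multiplicity data `N(a⁺) = N`. -/
def SideParPlusN (f : ℂ → ℂ) (a : ℂ) (N : ℕ) : Prop :=
  ∃ m q : ℕ, MinPreperiod f a m ∧ OPPeriod f (f^[m] a) q ∧
    IsolatedFixedPt f (f^[m] a) q ∧
    ((OrientPresIter f m ∧ HasMultiplierPlus f (f^[m] a) q 1 ∧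
        TaylorPlus f (f^[m] a) q N) ∨
     (OrientRevIter f m ∧ HasMultiplierMinus f (f^[m] a) q 1 ∧
        TaylorMinus f (f^[m] a) q N))

/-- `a⁻` is parabolic with multiplicity data `N(a⁻) = N`. -/
def SideParMinusN (f : ℂ → ℂ) (a : ℂ) (N : ℕ) : Prop :=
  ∃ m q : ℕ, MinPreperiod f a m ∧ OPPeriod f (f^[m] a) q ∧
    IsolatedFixedPt f (f^[m] a) q ∧
    ((OrientPresIter f m ∧ HasMultiplierMinus f (f^[m] a) q 1 ∧
        TaylorMinus f (f^[m] a) q N) ∨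
     (OrientRevIter f m ∧ HasMultiplierPlus f (f^[m] a) q 1 ∧
        TaylorPlus f (f^[m] a) q N))

/-- `a` is symmetrically hyperbolic: `λ(a⁺) = λ(a⁻) > 1`. -/
def SymmHyperbolic (f : ℂ → ℂ) (a : ℂ) : Prop :=
  ∃ lam : ℝ, SideHypPlus f a lam ∧ SideHypMinus f a lam

/-- `a` is symmetrically parabolic: both sides parabolic with `N(a⁺) = N(a⁻)`. -/
def SymmParabolic (f : ℂ → ℂ) (a : ℂ) : Prop :=
  ∃ N : ℕ, SideParPlusN f a N ∧ SideParMinusN f a N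

/-- The distortion function `ρ_h(z, t)` of a circle homeomorphism `h`. -/
noncomputable def distortionAt (h : ℂ → ℂ) (z : ℂ) (t : ℝ) : ℝ :=
  max (‖h (expMap t * z) - h z‖ / ‖h (expMap (-t) * z) - h z‖)
      (‖h (expMap (-t) * z) - h z‖ / ‖h (expMap t * z) - h z‖)

/-- Condition (H/P→H/P): there is `μ > 0` matching parabolic sides of `a` to parabolic sides
of `b` with `N(a^±) = μ · N(b^±)`, and hyperbolic sides to hyperbolic sides with
`λ(b^±) = λ(a^±)^μ`. -/
def CondHH (f g : ℂ → ℂ) (a b : ℂ) : Prop :=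
  ∃ μ : ℝ, 0 < μ ∧
    (∀ N : ℕ, SideParPlusN f a N → ∃ N' : ℕ, SideParPlusN g b N' ∧ (N : ℝ) = μ * N') ∧
    (∀ N : ℕ, SideParMinusN f a N → ∃ N' : ℕ, SideParMinusN g b N' ∧ (N : ℝ) = μ * N') ∧
    (∀ lam : ℝ, SideHypPlus f a lam → SideHypPlus g b (lam ^ μ)) ∧
    (∀ lam : ℝ, SideHypMinus f a lam → SideHypMinus g b (lam ^ μ))

/-- Condition (H→P): `a⁺` and `a⁻` are hyperbolic and `b` is symmetrically parabolic. -/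
def CondHP (f g : ℂ → ℂ) (a b : ℂ) : Prop :=
  (∃ lam : ℝ, SideHypPlus f a lam) ∧ (∃ lam : ℝ, SideHypMinus f a lam) ∧ SymmParabolic g b

/-- The set `F_n = (f^[n-1])⁻¹({a₀, …, a_r}) ∩ S¹`. -/
def Fset (f : ℂ → ℂ) {r : ℕ} (a : Fin (r + 1) → ℂ) (n : ℕ) : Set ℂ :=
  {z : ℂ | z ∈ S1 ∧ f^[n - 1] z ∈ Set.range a}

/-- `A` is a complementary arc of `F_n`: the closure of a connected component
of `S¹ ∖ F_n`. -/
def IsComplArc (f : ℂ → ℂ) {r : ℕ} (a : Fin (r + 1) → ℂ) (n : ℕ) (A : Set ℂ) : Prop :=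
  ∃ z ∈ S1 \ Fset f a n, A = closure (connectedComponentIn (S1 \ Fset f a n) z)

/-- `φ` has relative distortion bounded by `M` on `X`. -/
def RelDistBdd (φ : ℂ → ℂ) (X : Set ℂ) (M : ℝ) : Prop :=
  ∀ A B : Set ℂ, A ⊆ X → B ⊆ X → 0 < Metric.diam B → 0 < Metric.diam (φ '' B) →
    M⁻¹ * (Metric.diam A / Metric.diam B) ≤ Metric.diam (φ '' A) / Metric.diam (φ '' B) ∧
    Metric.diam (φ '' A) / Metric.diam (φ '' B) ≤ M * (Metric.diam A / Metric.diam B)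

/-- `J` is a Jordan curve in `ℂ`. -/
def JordanCurve (J : Set ℂ) : Prop :=
  ∃ γ : ℂ → ℂ, ContinuousOn γ S1 ∧ Set.InjOn γ S1 ∧ γ '' S1 = J

/-- `J` is a welding curve for the circle homeomorphism `h`. -/
def IsWeldingPair (h : ℂ → ℂ) (J : Set ℂ) : Prop :=
  JordanCurve J ∧
  ∃ U V : Set ℂ, IsOpen U ∧ IsOpen V ∧ IsConnected U ∧ IsConnected V ∧
    Bornology.IsBounded U ∧ ¬ Bornology.IsBounded V ∧ Disjoint U V ∧
    U ∪ V = {z : ℂ | z ∉ J} ∧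
    ∃ H₁ H₂ : ℂ → ℂ,
      ContinuousOn H₁ (Metric.closedBall 0 1) ∧
      Set.InjOn H₁ (Metric.closedBall 0 1) ∧
      DifferentiableOn ℂ H₁ (Metric.ball 0 1) ∧
      H₁ '' Metric.ball 0 1 = U ∧
      H₁ '' Metric.closedBall 0 1 = U ∪ J ∧
      ContinuousOn H₂ {z : ℂ | 1 ≤ ‖z‖} ∧
      Set.InjOn H₂ {z : ℂ | 1 ≤ ‖z‖} ∧
      DifferentiableOn ℂ H₂ {z : ℂ | 1 < ‖z‖} ∧
      H₂ '' {z : ℂ | 1 < ‖z‖} = V ∧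
      H₂ '' {z : ℂ | 1 ≤ ‖z‖} = V ∪ J ∧
      Filter.Tendsto (fun z : ℂ => ‖H₂ z‖)
        (Filter.comap norm Filter.atTop) Filter.atTop ∧
      ∀ z ∈ S1, H₂ (h z) = H₁ z

/-- `h` is a welding homeomorphism. -/
def IsWeldingHomeo (h : ℂ → ℂ) : Prop := ∃ J : Set ℂ, IsWeldingPair h J

/-- `J'` is the image of `J` under a Möbius transformation (whose pole avoids `J`). -/
def MoebiusEquivCurves (J J' : Set ℂ) : Prop :=
  ∃ p q u v : ℂ, p * v - q * u ≠ 0 ∧ (∀ z ∈ J, u * z + v ≠ 0) ∧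
    J' = (fun z : ℂ => (p * z + q) / (u * z + v)) '' J

/-- The inversion (anti-conformal reflection) in the circle with center `c` and radius `ρ`. -/
noncomputable def circleInv (c : ℂ) (ρ : ℝ) (z : ℂ) : ℂ :=
  c + (ρ : ℂ) ^ 2 / ((starRingEnd ℂ) z - (starRingEnd ℂ) c)

end

/-! An injective holomorphic map has no critical points: if `g' z₀ = 0`, then near `z₀` one can
write `g - g z₀ = φ ^ n` with `n ≥ 2` and `φ` an open map at `z₀`, so every value of `g` close to
`g z₀` is taken at least twice. Hence `f'(z) = 1 - ∑ i aᵢ / z ^ (i + 1)` has no zeros in `𝔻*`,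
i.e. the monic polynomial `z ^ (d + 1) f'(z)` of degree `d + 1` has all its roots in the closed
unit disc. Its constant coefficient `-d a_d` is, up to sign, the product of these roots. -/

open Topology Complex Polynomial

namespace AnalyticAt

variable {u φ g : ℂ → ℂ} {z₀ : ℂ} {n : ℕ}

theorem exists_pow_eq_of_ne_zero (hu : AnalyticAt ℂ u z₀) (hu₀ : u z₀ ≠ 0) (hn : n ≠ 0) :
    ∃ v : ℂ → ℂ, AnalyticAt ℂ v z₀ ∧ v z₀ ≠ 0 ∧ ∀ z, v z ^ n = u z := by
  obtain ⟨c, hc⟩ := IsAlgClosed.exists_pow_nat_eq (u z₀) (Nat.pos_of_ne_zero hn)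
  have hc₀ : c ≠ 0 := by rintro rfl; exact hu₀ (by rw [← hc, zero_pow hn])
  -- dividing by `u z₀` moves the base of the root to `1 ∈ slitPlane`
  refine ⟨fun z => c * (u z / u z₀) ^ (n⁻¹ : ℂ), ?_, by simp [hu₀, hc₀], fun z => ?_⟩
  · exact analyticAt_const.mul <| (hu.div analyticAt_const hu₀).cpow analyticAt_const
      (by simp [hu₀])
  · rw [mul_pow, cpow_nat_inv_pow _ hn, hc, mul_div_cancel₀ _ hu₀]

theorem exists_eventuallyEq_pow_of_analyticOrderAt_eq (hg : AnalyticAt ℂ g z₀)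
    (hord : analyticOrderAt g z₀ = n) (hn : n ≠ 0) :
    ∃ φ : ℂ → ℂ, AnalyticAt ℂ φ z₀ ∧ analyticOrderAt φ z₀ = 1 ∧
      g =ᶠ[𝓝 z₀] fun z => φ z ^ n := by
  obtain ⟨u, hu, hu₀, hgu⟩ := hg.analyticOrderAt_eq_natCast.mp hord
  obtain ⟨v, hv, hv₀, hvu⟩ := hu.exists_pow_eq_of_ne_zero hu₀ hn
  refine ⟨fun z => (z - z₀) * v z, by fun_prop, ?_, ?_⟩
  · exact (analyticAt_id.sub analyticAt_const).mul hv |>.analyticOrderAt_eq_natCast.mpr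
      ⟨v, hv, hv₀, .of_forall fun z => by simp⟩
  · filter_upwards [hgu] with z hz
    rw [hz, smul_eq_mul, mul_pow, hvu]

theorem not_injOn_pow_of_analyticOrderAt_eq_one (hφ : AnalyticAt ℂ φ z₀)
    (hord : analyticOrderAt φ z₀ = 1) (hn : 2 ≤ n) {s : Set ℂ} (hs : s ∈ 𝓝 z₀) :
    ¬ InjOn (fun z => φ z ^ n) s := by
  have hφ₀ : φ z₀ = 0 := apply_eq_zero_of_analyticOrderAt_ne_zero (by simp [hord])
  have hopen : 𝓝 0 ≤ map φ (𝓝 z₀) := by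
    refine hφ₀ ▸ hφ.eventually_constant_or_nhds_le_map_nhds.resolve_left fun hconst => ?_
    have := eventuallyConst_iff_analyticOrderAt_sub_eq_top.mp
      (eventuallyConst_iff_exists_eventuallyEq.mpr ⟨_, hconst⟩)
    simp [hφ₀, hord] at this
  set ζ : ℂ := exp (2 * Real.pi * I / n)
  have hζ : IsPrimitiveRoot ζ n := isPrimitiveRoot_exp n (by omega)
  have himage : ∀ᶠ w in 𝓝 (0 : ℂ), w ∈ φ '' s := hopen (image_mem_map hs)
  have hrot : Tendsto (ζ * ·) (𝓝 0) (𝓝 0) := by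
    simpa using (continuous_const_mul ζ).tendsto 0
  obtain ⟨w, ⟨⟨z₁, hz₁, hφz₁⟩, ⟨z₂, hz₂, hφz₂⟩⟩, hw₀⟩ :
      ∃ w, (w ∈ φ '' s ∧ ζ * w ∈ φ '' s) ∧ w ≠ 0 :=
    ((himage.and (hrot.eventually himage)).filter_mono nhdsWithin_le_nhds).and
      (self_mem_nhdsWithin (s := {0}ᶜ)) |>.exists
  intro hinj
  have hne : w ≠ ζ * w := fun h =>
    hζ.ne_one (by omega) (mul_right_cancel₀ hw₀ (by simpa using h.symm))
  have heq : φ z₁ = φ z₂ := congrArg φ <| hinj hz₁ hz₂ <| by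
    simp only [hφz₁, hφz₂, mul_pow, hζ.pow_eq_one, one_mul]
  exact hne (by rwa [hφz₁, hφz₂] at heq)

theorem deriv_ne_zero_of_injOn (hg : AnalyticAt ℂ g z₀) {s : Set ℂ} (hs : s ∈ 𝓝 z₀)
    (hinj : InjOn g s) : deriv g z₀ ≠ 0 := by
  intro hder
  set h : ℂ → ℂ := fun z => g z - g z₀
  have hh : AnalyticAt ℂ h z₀ := hg.sub analyticAt_const
  have hinj' : InjOn h s := fun x hx y hy hxy => hinj hx hy (sub_left_inj.mp hxy)
  have htwo : 2 ≤ analyticOrderAt h z₀ := by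
    refine (analyticOrderAt_deriv_ge_iff hh (sub_self _) (n := 1)).mp ?_
    refine Order.one_le_iff_ne_zero.mpr (analyticOrderAt_ne_zero.mpr ⟨hh.deriv, ?_⟩)
    simpa [h] using hder
  cases hord : analyticOrderAt h z₀ with
  | top =>
    obtain ⟨z, ⟨hz₀, hzs⟩, hz⟩ :=
      (((analyticOrderAt_eq_top.mp hord).and hs).filter_mono nhdsWithin_le_nhds).and
        (self_mem_nhdsWithin (s := {z₀}ᶜ)) |>.exists
    exact hz (hinj' hzs (mem_of_mem_nhds hs) (by simp [h, hz₀]))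
  | coe n =>
    have hn : 2 ≤ n := by exact_mod_cast hord ▸ htwo
    obtain ⟨φ, hφ, hφord, hhφ⟩ := hh.exists_eventuallyEq_pow_of_analyticOrderAt_eq hord (by omega)
    exact hφ.not_injOn_pow_of_analyticOrderAt_eq_one hφord hn (inter_mem hs hhφ)
      ((hinj'.mono inter_subset_left).congr fun z hz => hz.2)

end AnalyticAt

theorem Polynomial.Monic.norm_coeff_zero_le_one {K : Type*} [NormedField K] [IsAlgClosed K]
    {p : K[X]} (hp : p.Monic) (hroots : ∀ z ∈ p.roots, ‖z‖ ≤ 1) : ‖p.coeff 0‖ ≤ 1 := by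
  simpa using coeff_le_of_roots_le (f := RingHom.id K) (B := 1) 0 hp (IsAlgClosed.splits _)
    (by simpa using hroots)

theorem hasDerivAt_add_sum_div_pow (s : Finset ℕ) (a : ℕ → ℂ) {z : ℂ} (hz : z ≠ 0) :
    HasDerivAt (fun z => z + ∑ i ∈ s, a i / z ^ i)
      (1 - ∑ i ∈ s, i * a i / z ^ (i + 1)) z := by
  have hterm (i : ℕ) : HasDerivAt (fun z => a i / z ^ i) (-(i * a i / z ^ (i + 1))) z := by
    have h := (hasDerivAt_zpow (-i : ℤ) z (.inl hz)).const_mul (a i)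
    simp only [zpow_neg, zpow_natCast, ← div_eq_mul_inv] at h
    refine h.congr_deriv ?_
    rw [show (-i : ℤ) - 1 = -((i + 1 : ℕ) : ℤ) by push_cast; ring, zpow_neg, zpow_natCast]
    push_cast
    ring
  simpa only [Finset.sum_neg_distrib, ← sub_eq_add_neg] using
    (hasDerivAt_id' z).fun_add (HasDerivAt.fun_sum (u := s) fun i _ => hterm i)

/-- `X ^ (d + 1)` times the derivative of `z + ∑ i ∈ Icc 1 d, a i / z ^ i`. -/
noncomputable def derivNumerator (d : ℕ) (a : ℕ → ℂ) : ℂ[X] :=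
  X ^ (d + 1) - ∑ i ∈ Finset.Icc 1 d, C (i * a i) * X ^ (d - i)

section derivNumerator

variable (d : ℕ) (a : ℕ → ℂ)

theorem derivNumerator_monic : (derivNumerator d a).Monic := by
  refine monic_X_pow_sub (degree_sum_le _ _ |>.trans_lt ?_)
  refine (Finset.sup_lt_iff (WithBot.bot_lt_coe _)).mpr fun i _ => ?_
  exact (degree_C_mul_X_pow_le _ _).trans_lt
    (by exact_mod_cast Nat.lt_succ_of_le (Nat.sub_le d i))

theorem coeff_zero_derivNumerator (hd : 1 ≤ d) :
    (derivNumerator d a).coeff 0 = -(d * a d) := by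
  rw [derivNumerator, coeff_sub, coeff_X_pow, finsetSum_coeff,
    Finset.sum_eq_single_of_mem d (Finset.mem_Icc.mpr ⟨hd, le_rfl⟩)]
  · simp
  · intro i hi hid
    rw [coeff_C_mul_X_pow, if_neg (by grind)]

theorem eval_derivNumerator {z : ℂ} (hz : z ≠ 0) :
    (derivNumerator d a).eval z =
      z ^ (d + 1) * (1 - ∑ i ∈ Finset.Icc 1 d, i * a i / z ^ (i + 1)) := by
  simp only [derivNumerator, eval_sub, eval_pow, eval_X, eval_finsetSum, eval_mul, eval_C,
    mul_sub, mul_one, Finset.mul_sum]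
  congr 1
  refine Finset.sum_congr rfl fun i hi => ?_
  obtain ⟨-, hid⟩ := Finset.mem_Icc.mp hi
  rw [show d + 1 = (d - i) + (i + 1) by omega, pow_add]
  field_simp

theorem norm_le_one_of_mem_roots_derivNumerator
    (hinj : InjOn (fun z : ℂ => z + ∑ i ∈ Finset.Icc 1 d, a i / z ^ i) {z : ℂ | 1 < ‖z‖})
    {z : ℂ} (hz : z ∈ (derivNumerator d a).roots) : ‖z‖ ≤ 1 := by
  by_contra! hz₁
  have hz₀ : z ≠ 0 := norm_pos_iff.mp (one_pos.trans hz₁)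
  have hcrit : deriv (fun z : ℂ => z + ∑ i ∈ Finset.Icc 1 d, a i / z ^ i) z ≠ 0 :=
    AnalyticAt.deriv_ne_zero_of_injOn (by fun_prop (disch := simp [hz₀]))
      ((isOpen_lt continuous_const continuous_norm).mem_nhds hz₁) hinj
  rw [(hasDerivAt_add_sum_div_pow _ a hz₀).deriv] at hcrit
  have hroot := (mem_roots (derivNumerator_monic d a).ne_zero).mp hz
  rw [IsRoot, eval_derivNumerator d a hz₀] at hroot
  exact hcrit ((mul_eq_zero.mp hroot).resolve_left (pow_ne_zero _ hz₀))

end derivNumerator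

/-- **Area-theorem coefficient bound.** If `f(z) = z + a₁/z + ⋯ + a_d/z^d` is injective
on the exterior disk `𝔻* = {|z| > 1}`, then `d·|a_d| ≤ 1`. -/
theorem last_coefficient_bound_of_univalent
    (d : ℕ) (hd : 1 ≤ d) (a : ℕ → ℂ)
    (hinj : Set.InjOn (fun z : ℂ => z + ∑ i ∈ Finset.Icc 1 d, a i / z ^ i)
      {z : ℂ | 1 < ‖z‖}) :
    (d : ℝ) * ‖a d‖ ≤ 1 :=
  calc (d : ℝ) * ‖a d‖ = ‖(derivNumerator d a).coeff 0‖ := by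
        rw [coeff_zero_derivNumerator d a hd, norm_neg, norm_mul, Complex.norm_natCast]
    _ ≤ 1 := (derivNumerator_monic d a).norm_coeff_zero_le_one fun _ =>
        norm_le_one_of_mem_roots_derivNumerator d a hinj
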